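/- arXiv:2004.05894 — 2 statements merged into one kernel-verified Lean document; each statement's English description precedes it below -/
import Mathlib

section
/- For a Pareto(α, L) distribution with α > p, the expected hidden p-th moment above the maximum K_n of n i.i.d. samples, computed with the exact distribution of the maximum, is E[μ_{Kₙ,p}] = (α L^p /(α-p)) · n·B(n, (2α-p)/α), where B is the Beta function; equivalently, E[Kₙ^{p-α}] = L^{p-α} · n B(n, 1 + (α-p)/α). -/
open Real MeasureTheory ProbabilityTheory Set

/-- The Beta function B(a,b) = Γ(a)Γ(b)/Γ(a+b). -/
noncomputable def betaFn (a b : ℝ) : ℝ := Real.Gamma a * Real.Gamma b / Real.Gamma (a + b)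

lemma one_sub_pow_eq (z : ℝ) (n : ℕ) :
    (1 - z) ^ n = ∑ k ∈ Finset.range (n + 1), (-1 : ℝ) ^ k * (n.choose k) * z ^ k := by
  rw [sub_eq_neg_add, add_pow]
  refine Finset.sum_congr rfl fun k _ => ?_
  rw [neg_pow]
  ring

/-- The real Beta integral in terms of the Gamma function. -/
lemma real_beta_integral (c : ℝ) (hc : 0 < c) (n : ℕ) :
    ∫ u in (0:ℝ)..1, u ^ (c - 1) * (1 - u) ^ n
      = Real.Gamma c * n.factorial / Real.Gamma ((n : ℝ) + 1 + c) := by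
  have key := Complex.Gamma_mul_Gamma_eq_betaIntegral (s := (c : ℂ)) (t := ((n : ℝ) + 1 : ℂ))
    (by simpa using hc) (by simp; positivity)
  have hbeta : Complex.betaIntegral (c : ℂ) ((n : ℝ) + 1 : ℂ)
      = ((∫ u in (0:ℝ)..1, u ^ (c - 1) * (1 - u) ^ n : ℝ) : ℂ) := by
    rw [Complex.betaIntegral, ← intervalIntegral.integral_ofReal]
    refine intervalIntegral.integral_congr fun x hx => ?_
    rw [Set.uIcc_of_le (by norm_num : (0:ℝ) ≤ 1)] at hx
    have hx0 : 0 ≤ x := hx.1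
    have hx1 : x ≤ 1 := hx.2
    have h1 : ((x : ℂ)) ^ ((c : ℂ) - 1) = ((x ^ (c - 1) : ℝ) : ℂ) := by
      rw [Complex.ofReal_cpow hx0]
      push_cast
      ring_nf
    have h2 : (1 - (x : ℂ)) ^ (((n : ℝ) + 1 : ℂ) - 1) = (((1 - x) ^ n : ℝ) : ℂ) := by
      have : (((n : ℝ) + 1 : ℂ) - 1) = ((n : ℕ) : ℂ) := by push_cast; ring
      rw [this, Complex.cpow_natCast]
      push_cast
      ring
    rw [Complex.ofReal_mul, h1, h2]
  rw [hbeta] at key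
  have hgam : ∀ s : ℝ, Complex.Gamma (s : ℂ) = (Real.Gamma s : ℂ) := Complex.Gamma_ofReal
  have h1 : ((n : ℝ) + 1 : ℂ) = (((n : ℝ) + 1 : ℝ) : ℂ) := by push_cast; ring
  rw [h1] at key
  simp only [← Complex.ofReal_add, hgam] at key
  have kr : Real.Gamma c * Real.Gamma ((n:ℝ)+1)
      = Real.Gamma (c + ((n:ℝ)+1)) * ∫ u in (0:ℝ)..1, u ^ (c - 1) * (1 - u) ^ n := by
    exact_mod_cast key
  rw [show c + ((n:ℝ)+1) = (n:ℝ)+1+c by ring] at kr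
  have hfact : Real.Gamma ((n:ℝ)+1) = n.factorial := Real.Gamma_nat_eq_factorial n
  have hpos : 0 < Real.Gamma ((n:ℝ)+1+c) := Real.Gamma_pos_of_pos (by positivity)
  rw [hfact] at kr
  field_simp
  linarith [kr]

/-- For Kₙ the max of n i.i.d. Pareto(α, L) samples (exact distribution of the maximum),
E[μ_{Kₙ,p}] = E[α L^α Kₙ^(p-α)/(α-p)] = (α L^p/(α-p)) · n · B(n, (2α-p)/α). -/
theorem pareto_expected_hidden_moment_exact
    {Ω : Type*} [MeasurableSpace Ω] (μ : Measure Ω) [IsProbabilityMeasure μ]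
    (n : ℕ) (hn : 0 < n) (α L p : ℝ) (hL : 0 < L) (hp : 0 ≤ p) (hpα : p < α)
    (X : Fin n → Ω → ℝ) (hmeas : ∀ i, Measurable (X i))
    (hindep : iIndepFun X μ)
    (hpareto : ∀ i, ∀ x ≥ L, μ {ω | x < X i ω} = ENNReal.ofReal ((L / x) ^ α))
    (hsupp : ∀ i, ∀ᵐ ω ∂μ, L ≤ X i ω) :
    ∫ ω, α * L ^ α * (⨆ i, X i ω) ^ (p - α) / (α - p) ∂μ =
      α * L ^ p / (α - p) * n * betaFn n ((2 * α - p) / α) := by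
  have hα : 0 < α := lt_of_le_of_lt hp hpα
  have hαp : 0 < α - p := sub_pos.mpr hpα
  set c : ℝ := (α - p) / α with hc_def
  set β : ℝ := α / (α - p) with hβ_def
  have hc : 0 < c := by positivity
  have hβ : 0 < β := by positivity
  have hcβ : c * β = 1 := by rw [hc_def, hβ_def]; field_simp; try ring
  set e : ℝ := p - α with he_def
  have he : e < 0 := by rw [he_def]; linarith
  set T : ℝ := L ^ e with hT_def
  have hT : 0 < T := Real.rpow_pos_of_pos hL e
  have hLT : L ^ α * T ^ β = 1 := by
    rw [hT_def, ← Real.rpow_mul hL.le, ← Real.rpow_add hL]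
    have h0 : α + e * β = 0 := by
      rw [he_def, hβ_def]; field_simp; ring
    rw [h0, Real.rpow_zero]
  have hn' : Nonempty (Fin n) := ⟨⟨0, hn⟩⟩
  set M : Ω → ℝ := fun ω => ⨆ i, X i ω with hM_def
  have hMmeas : Measurable M := Measurable.iSup hmeas
  have hML : ∀ᵐ ω ∂μ, L ≤ M ω := by
    filter_upwards [hsupp ⟨0, hn⟩] with ω h
    exact h.trans (le_ciSup (Set.finite_range fun i => X i ω).bddAbove ⟨0, hn⟩)
  -- CDF of the maximum
  have hcdf : ∀ x : ℝ, L ≤ x → μ {ω | M ω ≤ x} = ENNReal.ofReal ((1 - (L / x) ^ α) ^ n) := by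
    intro x hx
    have hx0 : 0 < x := lt_of_lt_of_le hL hx
    have hLx0 : (0:ℝ) ≤ (L / x) ^ α := Real.rpow_nonneg (by positivity) α
    have hLx : (L / x) ^ α ≤ 1 :=
      Real.rpow_le_one (by positivity) (div_le_one_of_le₀ hx hx0.le) hα.le
    have hone : ∀ i : Fin n, μ (X i ⁻¹' Iic x) = ENNReal.ofReal (1 - (L / x) ^ α) := by
      intro i
      have hset : X i ⁻¹' Iic x = {ω | x < X i ω}ᶜ := by
        ext ω; simp [not_lt]
      have hms : MeasurableSet {ω | x < X i ω} := (hmeas i) measurableSet_Ioi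
      rw [hset, measure_compl hms (measure_ne_top μ _), hpareto i x hx, measure_univ,
        ← ENNReal.ofReal_one, ← ENNReal.ofReal_sub _ hLx0]
    have hset2 : {ω | M ω ≤ x} = ⋂ i, X i ⁻¹' Iic x := by
      ext ω
      simp only [mem_iInter, mem_setOf_eq, mem_preimage, mem_Iic, hM_def]
      exact ciSup_le_iff (Set.finite_range _).bddAbove
    rw [hset2, show (⋂ i, X i ⁻¹' Iic x) = ⋂ i ∈ Finset.univ, X i ⁻¹' Iic x by simp]
    rw [hindep.measure_inter_preimage_eq_mul Finset.univ (fun i _ => measurableSet_Iic)]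
    simp only [hone, Finset.prod_const, Finset.card_univ, Fintype.card_fin]
    rw [ENNReal.ofReal_pow (by linarith)]
  set Y : Ω → ℝ := fun ω => M ω ^ e with hY_def
  have hYmeas : Measurable Y := by
    rw [hY_def]; measurability
  have hY0 : 0 ≤ᵐ[μ] Y := by
    filter_upwards [hML] with ω h
    exact (Real.rpow_pos_of_pos (lt_of_lt_of_le hL h) e).le
  set g : ℝ → ℝ := fun t => (1 - L ^ α * t ^ β) ^ n with hg_def
  have hg_meas : Measurable g := by
    rw [hg_def]; measurability
  have hgnn : ∀ t ∈ Ioc (0:ℝ) T, 0 ≤ g t ∧ g t ≤ 1 := by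
    intro t ht
    have h1 : L ^ α * t ^ β ≤ 1 := by
      calc L ^ α * t ^ β ≤ L ^ α * T ^ β := by
            refine mul_le_mul_of_nonneg_left ?_ (Real.rpow_nonneg hL.le α)
            exact Real.rpow_le_rpow ht.1.le ht.2 hβ.le
        _ = 1 := hLT
    have h2 : (0:ℝ) ≤ L ^ α * t ^ β := by
      have := Real.rpow_nonneg ht.1.le β
      positivity
    rw [hg_def]
    exact ⟨pow_nonneg (by linarith) n, pow_le_one₀ (by linarith) (by linarith)⟩
  -- tail measure description
  have htail : ∀ t ∈ Ioi (0:ℝ), μ {ω | t ≤ Y ω}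
      = ENNReal.ofReal ((Ioc (0:ℝ) T).indicator g t) := by
    intro t ht
    rw [mem_Ioi] at ht
    by_cases htT : t ≤ T
    · set x := t ^ e⁻¹ with hx_def
      have hx0 : 0 < x := Real.rpow_pos_of_pos ht _
      have hxL : L ≤ x := by
        have h1 : x ^ e ≤ L ^ e := by
          rw [hx_def, Real.rpow_inv_rpow ht.le he.ne]
          rw [hT_def] at htT; exact htT
        exact (Real.rpow_le_rpow_iff_of_neg hx0 hL he).mp h1
      have hsets : {ω | t ≤ Y ω} =ᵐ[μ] {ω | M ω ≤ x} := by
        rw [Filter.eventuallyEq_set]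
        filter_upwards [hML] with ω h
        have hM0 : 0 < M ω := lt_of_lt_of_le hL h
        simp only [mem_setOf_eq, hY_def]
        conv_lhs => rw [show t = x ^ e by rw [hx_def, Real.rpow_inv_rpow ht.le he.ne]]
        exact Real.rpow_le_rpow_iff_of_neg hx0 hM0 he
      rw [measure_congr hsets, hcdf x hxL,
        indicator_of_mem (show t ∈ Ioc (0:ℝ) T from ⟨ht, htT⟩)]
      have hexp : -(e⁻¹ * α) = β := by
        rw [he_def, hβ_def]
        have h1 : p - α ≠ 0 := by intro h'; linarith [sub_eq_zero.mp h']
        have h2 : α - p ≠ 0 := by intro h'; linarith [sub_eq_zero.mp h']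
        field_simp
        ring
      have hxt : (L / x) ^ α = L ^ α * t ^ β := by
        rw [Real.div_rpow hL.le hx0.le, div_eq_mul_inv, hx_def,
          ← Real.rpow_mul ht.le, ← Real.rpow_neg ht.le, hexp]
      rw [hg_def, hxt]
    · push_neg at htT
      have hz : μ {ω | t ≤ Y ω} = 0 := by
        refine measure_eq_zero_iff_ae_notMem.mpr ?_
        filter_upwards [hML] with ω h
        simp only [mem_setOf_eq, not_le, hY_def]
        have h1 : M ω ^ e ≤ L ^ e :=
          (Real.rpow_le_rpow_iff_of_neg (lt_of_lt_of_le hL h) hL he).mpr h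
        rw [hT_def] at htT
        exact lt_of_le_of_lt h1 htT
      rw [hz, indicator_of_notMem (fun hmem => absurd hmem.2 (not_le.mpr htT)),
        ENNReal.ofReal_zero]
  have hintg : IntegrableOn g (Ioc 0 T) := by
    refine Measure.integrableOn_of_bounded (M := 1) (measure_Ioc_lt_top).ne
      hg_meas.aestronglyMeasurable ?_
    refine (ae_restrict_iff' measurableSet_Ioc).mpr (Filter.Eventually.of_forall fun t ht => ?_)
    rw [Real.norm_eq_abs, abs_le]
    exact ⟨by linarith [(hgnn t ht).1], (hgnn t ht).2⟩
  have hgnn' : 0 ≤ᵐ[volume.restrict (Ioc (0:ℝ) T)] g :=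
    (ae_restrict_iff' measurableSet_Ioc).mpr (Filter.Eventually.of_forall fun t ht => (hgnn t ht).1)
  -- layer cake
  have key1 : ∫ ω, Y ω ∂μ = ∫ t in (0:ℝ)..T, g t := by
    rw [integral_eq_lintegral_of_nonneg_ae hY0 hYmeas.aestronglyMeasurable,
      lintegral_eq_lintegral_meas_le μ hY0 hYmeas.aemeasurable,
      setLIntegral_congr_fun measurableSet_Ioi htail]
    have hind : ∀ t, ENNReal.ofReal ((Ioc (0:ℝ) T).indicator g t)
        = (Ioc (0:ℝ) T).indicator (fun t => ENNReal.ofReal (g t)) t := by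
      intro t; by_cases h : t ∈ Ioc (0:ℝ) T <;> simp [h]
    simp_rw [hind]
    rw [setLIntegral_indicator measurableSet_Ioc,
      show Ioc (0:ℝ) T ∩ Ioi (0:ℝ) = Ioc (0:ℝ) T from
        inter_eq_self_of_subset_left (fun x (hx : x ∈ Ioc (0:ℝ) T) => hx.1),
      ← ofReal_integral_eq_lintegral_ofReal hintg hgnn',
      ENNReal.toReal_ofReal (setIntegral_nonneg measurableSet_Ioc fun t ht => (hgnn t ht).1),
      intervalIntegral.integral_of_le hT.le]
  -- binomial expansion of J
  have hJ : ∫ t in (0:ℝ)..T, g t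
      = ∑ k ∈ Finset.range (n+1),
          (-1:ℝ)^k * (n.choose k) * (L^α)^k * (T ^ (β * k + 1) / (β * k + 1)) := by
    have congr1 : ∫ t in (0:ℝ)..T, g t
        = ∫ t in (0:ℝ)..T, ∑ k ∈ Finset.range (n+1),
            (-1:ℝ)^k * (n.choose k) * (L^α)^k * t ^ (β * k) := by
      refine intervalIntegral.integral_congr_ae (Filter.Eventually.of_forall fun t ht => ?_)
      rw [Set.uIoc_of_le hT.le] at ht
      have ht0 : 0 < t := ht.1
      simp only [hg_def]
      rw [one_sub_pow_eq]
      refine Finset.sum_congr rfl fun k _ => ?_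
      rw [mul_pow, ← Real.rpow_natCast (t ^ β) k, ← Real.rpow_mul ht0.le]
      ring
    rw [congr1, intervalIntegral.integral_finset_sum]
    · refine Finset.sum_congr rfl fun k _ => ?_
      have hβk : (-1:ℝ) < β * k := by
        have := mul_nonneg hβ.le (Nat.cast_nonneg (α := ℝ) k); linarith
      have hβk1 : β * (k:ℝ) + 1 ≠ 0 := by
        have := mul_nonneg hβ.le (Nat.cast_nonneg (α := ℝ) k); positivity
      rw [show (fun t : ℝ => (-1:ℝ)^k * (n.choose k) * (L^α)^k * t ^ (β * k))
          = fun t : ℝ => ((-1:ℝ)^k * (n.choose k) * (L^α)^k) * t ^ (β * k) by rfl,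
        intervalIntegral.integral_const_mul, integral_rpow (Or.inl hβk),
        Real.zero_rpow hβk1]
      ring
    · intro k _
      have hβk : (-1:ℝ) < β * k := by
        have := mul_nonneg hβ.le (Nat.cast_nonneg (α := ℝ) k); linarith
      exact (intervalIntegral.intervalIntegrable_rpow' hβk).const_mul _
  -- binomial expansion of I
  have hI : ∫ u in (0:ℝ)..1, u ^ (c - 1) * (1 - u) ^ n
      = ∑ k ∈ Finset.range (n+1), (-1:ℝ)^k * (n.choose k) * (1 / (c + k)) := by
    have congr1 : ∫ u in (0:ℝ)..1, u ^ (c - 1) * (1 - u) ^ n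
        = ∫ u in (0:ℝ)..1, ∑ k ∈ Finset.range (n+1),
            (-1:ℝ)^k * (n.choose k) * u ^ (c - 1 + k) := by
      refine intervalIntegral.integral_congr_ae (Filter.Eventually.of_forall fun u hu => ?_)
      rw [Set.uIoc_of_le (by norm_num : (0:ℝ) ≤ 1)] at hu
      have hu0 : 0 < u := hu.1
      rw [one_sub_pow_eq, Finset.mul_sum]
      refine Finset.sum_congr rfl fun k _ => ?_
      rw [Real.rpow_add hu0, Real.rpow_natCast]
      ring
    rw [congr1, intervalIntegral.integral_finset_sum]
    · refine Finset.sum_congr rfl fun k _ => ?_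
      have hck : (-1:ℝ) < c - 1 + k := by
        have := Nat.cast_nonneg (α := ℝ) k; linarith
      have hck1 : c - 1 + (k:ℝ) + 1 ≠ 0 := by
        have := Nat.cast_nonneg (α := ℝ) k
        intro h'; linarith
      rw [show (fun u : ℝ => (-1:ℝ)^k * (n.choose k) * u ^ (c - 1 + k))
          = fun u : ℝ => ((-1:ℝ)^k * (n.choose k)) * u ^ (c - 1 + k) by rfl,
        intervalIntegral.integral_const_mul, integral_rpow (Or.inl hck),
        Real.zero_rpow hck1, Real.one_rpow]
      rw [show c - 1 + (k:ℝ) + 1 = c + k by ring]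
      ring
    · intro k _
      have hck : (-1:ℝ) < c - 1 + k := by
        have := Nat.cast_nonneg (α := ℝ) k; linarith
      exact (intervalIntegral.intervalIntegrable_rpow' hck).const_mul _
  -- termwise identity: J = T * c * I
  have hJI : ∫ t in (0:ℝ)..T, g t
      = T * c * ∫ u in (0:ℝ)..1, u ^ (c - 1) * (1 - u) ^ n := by
    rw [hJ, hI, Finset.mul_sum]
    refine Finset.sum_congr rfl fun k _ => ?_
    have hk0 : (0:ℝ) ≤ (k:ℝ) := Nat.cast_nonneg k
    have hβk1 : 0 < β * (k:ℝ) + 1 := by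
      have := mul_nonneg hβ.le hk0; linarith
    have hck : 0 < c + (k:ℝ) := by linarith
    have hmain : (L^α)^k * T ^ (β * k + 1) = T := by
      rw [Real.rpow_add hT, Real.rpow_one, ← Real.rpow_natCast (L^α) k,
        Real.rpow_mul hT.le, ← mul_assoc,
        ← Real.mul_rpow (Real.rpow_nonneg hL.le α) (Real.rpow_nonneg hT.le β),
        hLT, Real.one_rpow, one_mul]
    have hceq : c * (β * (k:ℝ) + 1) = c + (k:ℝ) := by
      have h' : c * (β * (k:ℝ) + 1) = (c * β) * (k:ℝ) + c := by ring
      rw [h', hcβ]; ring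
    have hstep : (-1:ℝ)^k * (n.choose k) * (L^α)^k * (T ^ (β * k + 1) / (β * k + 1))
        = ((-1:ℝ)^k * (n.choose k)) * (((L^α)^k * T ^ (β * k + 1)) * (β * k + 1)⁻¹) := by
      ring
    have h3 : (β * (k:ℝ) + 1)⁻¹ = c / (c + k) := by
      field_simp
      linarith [hceq]
    rw [hstep, hmain, h3]
    ring
  -- final assembly
  have hsplit : (∫ ω, α * L ^ α * (⨆ i, X i ω) ^ e / (α - p) ∂μ)
      = (α * L ^ α / (α - p)) * ∫ ω, Y ω ∂μ := by
    rw [← integral_const_mul]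
    refine integral_congr_ae (Filter.Eventually.of_forall fun ω => ?_)
    simp only [hY_def, hM_def]
    ring
  have hb : (2 * α - p) / α = 1 + c := by
    rw [hc_def]; field_simp; ring
  have hG2 : Real.Gamma (1 + c) = c * Real.Gamma c := by
    rw [add_comm]; exact Real.Gamma_add_one (ne_of_gt hc)
  have hG3 : (n:ℝ) * Real.Gamma (n:ℝ) = (n.factorial : ℝ) := by
    have h1 : Real.Gamma ((n:ℝ) + 1) = (n:ℝ) * Real.Gamma (n:ℝ) :=
      Real.Gamma_add_one (Nat.cast_ne_zero.mpr hn.ne')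
    rw [← h1, Real.Gamma_nat_eq_factorial]
  have hLp : L ^ α * T = L ^ p := by
    rw [hT_def, ← Real.rpow_add hL]
    congr 1
    rw [he_def]; ring
  rw [hsplit, key1, hJI, real_beta_integral c hc n, hb]
  simp only [betaFn]
  rw [show (n:ℝ) + (1 + c) = (n:ℝ) + 1 + c from by ring, hG2, ← hLp, ← hG3]
  ring
end

section
/- For a Pareto(α, L) with α > 1, the ratio of the expected hidden mean to the total mean equals E[μ_{Kₙ,1}]/E[X] = n^{1/α - 1} Γ(2 - 1/α) (using the Fréchet approximation for the maximum), which tends to 0 as n → ∞ for α > 1, and tends to Γ(1) · lim n^{1/α - 1} = 1 as α → 1⁺ for fixed n. -/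
open Real Filter Topology

/-- Ratio of expected hidden mean (Fréchet approximation) to the total Pareto mean:
the ratio equals ((α-1)/α) n^(1/α-1) Γ(1-1/α); it tends to 0 as n → ∞ for α > 1,
and tends to 1 as α → 1⁺ for fixed n. -/
theorem hidden_mean_ratio (α L : ℝ) (hα : 1 < α) (hL : 0 < L) (n : ℕ) (hn : 1 ≤ n) :
    (L * (n : ℝ) ^ (1 / α - 1) * Real.Gamma (1 - 1 / α)) / (α * L / (α - 1)) =
      ((α - 1) / α) * (n : ℝ) ^ (1 / α - 1) * Real.Gamma (1 - 1 / α) ∧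
    Tendsto (fun m : ℕ => ((α - 1) / α) * (m : ℝ) ^ (1 / α - 1) * Real.Gamma (1 - 1 / α))
      atTop (𝓝 0) ∧
    Tendsto (fun a : ℝ => ((a - 1) / a) * (n : ℝ) ^ (1 / a - 1) * Real.Gamma (1 - 1 / a))
      (𝓝[>] 1) (𝓝 1) := by
  have hα0 : α ≠ 0 := by linarith
  have hα1 : α - 1 ≠ 0 := by linarith
  refine ⟨by field_simp, ?_, ?_⟩
  · have h1 : Tendsto (fun m : ℕ => (m : ℝ) ^ (1 / α - 1)) atTop (𝓝 0) := by
      have hy : (0 : ℝ) < 1 - 1 / α := by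
        have : 1 / α < 1 := by
          rw [div_lt_one (by linarith)]; linarith
        linarith
      have h := tendsto_rpow_neg_atTop hy
      have h' : Tendsto (fun x : ℝ => x ^ (1 / α - 1)) atTop (𝓝 0) := by
        simpa [neg_sub] using h
      exact h'.comp tendsto_natCast_atTop_atTop
    have := (h1.const_mul ((α - 1) / α)).mul_const (Real.Gamma (1 - 1 / α))
    simpa using this
  · have heq : ∀ᶠ a in 𝓝[>] (1 : ℝ),
        ((a - 1) / a) * (n : ℝ) ^ (1 / a - 1) * Real.Gamma (1 - 1 / a)
          = Real.Gamma (1 - 1 / a + 1) * (n : ℝ) ^ (1 / a - 1) := by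
      filter_upwards [self_mem_nhdsWithin] with a (ha : 1 < a)
      have ha0 : a ≠ 0 := by linarith
      have hx : (1 : ℝ) - 1 / a ≠ 0 := by
        have : 1 / a < 1 := by rw [div_lt_one (by linarith)]; linarith
        linarith
      rw [Real.Gamma_add_one hx]
      have : (a - 1) / a = 1 - 1 / a := by field_simp
      rw [this]; ring
    have h1 : Tendsto (fun a : ℝ => Real.Gamma (1 - 1 / a + 1)) (𝓝[>] 1) (𝓝 1) := by
      have hG : ContinuousAt Real.Gamma 1 := by
        refine (Real.differentiableAt_Gamma fun m => ?_).continuousAt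
        have : (0 : ℝ) ≤ m := Nat.cast_nonneg m
        intro h; linarith
      have hc : ContinuousAt (fun a : ℝ => Real.Gamma (1 - 1 / a + 1)) 1 :=
        ContinuousAt.comp (g := Real.Gamma) (f := fun a : ℝ => 1 - 1 / a + 1) (by simpa using hG) (by fun_prop (disch := norm_num))
      have := hc.tendsto
      simpa using this.mono_left nhdsWithin_le_nhds
    have h2 : Tendsto (fun a : ℝ => (n : ℝ) ^ (1 / a - 1)) (𝓝[>] 1) (𝓝 1) := by
      have hn0 : (0 : ℝ) < n := by exact_mod_cast hn
      have hf : ContinuousAt (fun a : ℝ => 1 / a - 1) 1 := by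
        fun_prop (disch := norm_num)
      have hc : ContinuousAt (fun a : ℝ => (n : ℝ) ^ (1 / a - 1)) 1 :=
        continuousAt_const.rpow hf (Or.inl hn0.ne')
      have := hc.tendsto
      simpa using this.mono_left nhdsWithin_le_nhds
    have hmul : Tendsto (fun a : ℝ => Real.Gamma (1 - 1 / a + 1) * (n : ℝ) ^ (1 / a - 1))
        (𝓝[>] 1) (𝓝 1) := by simpa using h1.mul h2
    exact Tendsto.congr' (heq.mono fun a h => h.symm) hmul
end
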